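/- Let E be a real inner product space of dimension 2n with 2n ≥ 4, J a compatible almost complex structure, and R an algebraic curvature tensor on E that is an RK-tensor and has constant antiholomorphic sectional curvature ν. Then ν = ((2n+1)τ - 3τ') / (8n(n²-1)), where τ is the scalar curvature of R and τ' is the scalar curvature of R'(x,y,z,u) = R(x,y,Jz,Ju). -/

import Mathlib

/-!
Write `H x = R x (J x) (J x) x`. For a unit vector `x` the hypothesis fixes `R x y y x = ν` on the
unit vectors `y ⊥ x, J x`, so tracing over the basis gives `S x x = H x + (2n - 2) ν`. Expanding
the hypothesis on the antiholomorphic pairs `(x + J y, y + J x)` and `(x + y, J x - J y)` and using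
the Bianchi identity gives `6 R x y (J x) (J y) = 2 ν - H x - H y` for orthonormal `x, y` with
`y ⊥ J x`. Trading the quartic term `H y` for the quadratic `S y y - (2n - 2) ν` makes
`y ↦ 6 R x y (J x) (J y) + S y y` a quadratic form equal to `2n ν - H x` on the unit vectors of
`{x, J x}ᗮ`; its trace, summed over `x` in the basis, is a linear relation between `τ`, `τ'`
and `ν`.
-/

open scoped RealInnerProductSpace

section BilinForm

variable {ι E : Type*} [Fintype ι] [NormedAddCommGroup E] [InnerProductSpace ℝ E]

theorem OrthonormalBasis.sum_inner_mul_apply (b : OrthonormalBasis ι ℝ E)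
    (B : LinearMap.BilinForm ℝ E) (w z : E) : ∑ i, ⟪w, b i⟫ * B (b i) z = B w z := by
  conv_rhs => rw [← b.sum_repr' w]
  simp [real_inner_comm]

theorem OrthonormalBasis.sum_inner_mul_apply' (b : OrthonormalBasis ι ℝ E)
    (B : LinearMap.BilinForm ℝ E) (w z : E) : ∑ i, ⟪w, b i⟫ * B z (b i) = B z w :=
  b.sum_inner_mul_apply B.flip w z

theorem OrthonormalBasis.sum_apply_sub_proj (b : OrthonormalBasis ι ℝ E)
    (B : LinearMap.BilinForm ℝ E) {u v : E} (hu : ‖u‖ = 1) (hv : ‖v‖ = 1) (huv : ⟪u, v⟫ = 0) :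
    ∑ i, B (b i - ⟪u, b i⟫ • u - ⟪v, b i⟫ • v) (b i - ⟪u, b i⟫ • u - ⟪v, b i⟫ • v)
      = ∑ i, B (b i) (b i) - B u u - B v v := by
  have expand : ∀ i, B (b i - ⟪u, b i⟫ • u - ⟪v, b i⟫ • v) (b i - ⟪u, b i⟫ • u - ⟪v, b i⟫ • v)
      = B (b i) (b i) - (⟪u, b i⟫ * B (b i) u + ⟪u, b i⟫ * B u (b i)
          + ⟪v, b i⟫ * B (b i) v + ⟪v, b i⟫ * B v (b i))
        + (⟪u, b i⟫ * ⟪b i, u⟫ * B u u + ⟪u, b i⟫ * ⟪b i, v⟫ * (B u v + B v u)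
          + ⟪v, b i⟫ * ⟪b i, v⟫ * B v v) := fun i => by
    simp only [map_sub, map_smul, LinearMap.sub_apply, LinearMap.smul_apply, smul_eq_mul,
      real_inner_comm (b i)]
    ring
  simp only [expand, Finset.sum_add_distrib, Finset.sum_sub_distrib, ← Finset.sum_mul,
    b.sum_inner_mul_apply, b.sum_inner_mul_apply', b.sum_inner_mul_inner, huv,
    real_inner_self_eq_norm_sq, hu, hv]
  ring

theorem LinearMap.BilinForm.apply_self_eq_mul_inner_self {B : LinearMap.BilinForm ℝ E}
    {u v : E} {c : ℝ} (h : ∀ y, ‖y‖ = 1 → ⟪u, y⟫ = 0 → ⟪v, y⟫ = 0 → B y y = c) {y : E}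
    (hu : ⟪u, y⟫ = 0) (hv : ⟪v, y⟫ = 0) : B y y = c * ⟪y, y⟫ := by
  rcases eq_or_ne y 0 with rfl | hy0
  · simp
  have hn : ‖y‖ ≠ 0 := norm_ne_zero_iff.2 hy0
  have hunit := h (‖y‖⁻¹ • y) (by rw [norm_smul, norm_inv, norm_norm, inv_mul_cancel₀ hn])
    (by rw [real_inner_smul_right, hu, mul_zero]) (by rw [real_inner_smul_right, hv, mul_zero])
  simp only [map_smul, LinearMap.smul_apply, smul_eq_mul] at hunit
  rw [real_inner_self_eq_norm_sq, ← hunit]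
  field_simp

theorem OrthonormalBasis.sum_apply_self_eq_of_orthogonal (b : OrthonormalBasis ι ℝ E)
    (B : LinearMap.BilinForm ℝ E) {u v : E} (hu : ‖u‖ = 1) (hv : ‖v‖ = 1) (huv : ⟪u, v⟫ = 0)
    {c : ℝ} (h : ∀ y, ‖y‖ = 1 → ⟪u, y⟫ = 0 → ⟪v, y⟫ = 0 → B y y = c) :
    ∑ i, B (b i) (b i) = B u u + B v v + c * (Fintype.card ι - 2) := by
  set p : ι → E := fun i => b i - ⟪u, b i⟫ • u - ⟪v, b i⟫ • v
  have hBp : ∀ i, B (p i) (p i) = c * ⟪p i, p i⟫ := fun i => by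
    refine B.apply_self_eq_mul_inner_self h ?_ ?_ <;>
    · simp only [p, inner_sub_right, real_inner_smul_right, real_inner_self_eq_norm_sq, hu, hv,
        huv, real_inner_comm u v]
      ring
  have hB : ∑ i, B (p i) (p i) = _ := b.sum_apply_sub_proj B hu hv huv
  have hinner : ∑ i, ⟪p i, p i⟫ = _ := b.sum_apply_sub_proj (innerₗ E) hu hv huv
  simp only [innerₗ_apply_apply, inner_self_eq_one_of_norm_eq_one, b.norm_eq_one, hu, hv,
    Finset.sum_const, Finset.card_univ, nsmul_eq_mul, mul_one] at hinner
  rw [Finset.sum_congr rfl fun i _ => hBp i, ← Finset.mul_sum, hinner] at hB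
  linarith

end BilinForm

section Curvature

variable {E : Type*} [NormedAddCommGroup E] [InnerProductSpace ℝ E]

structure IsCompatibleComplexStructure (J : E →ₗ[ℝ] E) : Prop where
  apply_apply : ∀ x, J (J x) = -x
  inner_map_map : ∀ x y, ⟪J x, J y⟫ = ⟪x, y⟫

structure IsCurvatureTensor (R : E →ₗ[ℝ] E →ₗ[ℝ] E →ₗ[ℝ] E →ₗ[ℝ] ℝ) : Prop where
  antisymm_left : ∀ x y z u, R x y z u = -R y x z u
  antisymm_right : ∀ x y z u, R x y z u = -R x y u z
  bianchi : ∀ x y z u, R x y z u + R y z x u + R z x y u = 0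

def IsRKTensor (J : E →ₗ[ℝ] E) (R : E →ₗ[ℝ] E →ₗ[ℝ] E →ₗ[ℝ] E →ₗ[ℝ] ℝ) : Prop :=
  ∀ x y z u : E, R x y z u = R (J x) (J y) (J z) (J u)

def HasConstAntiholomorphicCurvature (J : E →ₗ[ℝ] E)
    (R : E →ₗ[ℝ] E →ₗ[ℝ] E →ₗ[ℝ] E →ₗ[ℝ] ℝ) (ν : ℝ) : Prop :=
  ∀ x y : E, ‖x‖ = 1 → ‖y‖ = 1 → ⟪x, y⟫ = 0 → ⟪J x, y⟫ = 0 → R x y y x = ν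

variable {J : E →ₗ[ℝ] E} {R : E →ₗ[ℝ] E →ₗ[ℝ] E →ₗ[ℝ] E →ₗ[ℝ] ℝ} {ν : ℝ}

theorem IsCompatibleComplexStructure.inner_map_left (hJ : IsCompatibleComplexStructure J)
    (x y : E) : ⟪J x, y⟫ = -⟪x, J y⟫ := by
  rw [← hJ.inner_map_map x (J y), hJ.apply_apply, inner_neg_right, neg_neg]

theorem IsCompatibleComplexStructure.inner_self_map (hJ : IsCompatibleComplexStructure J)
    (x : E) : ⟪x, J x⟫ = 0 := by
  linarith [hJ.inner_map_left x x, real_inner_comm x (J x)]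

theorem IsCompatibleComplexStructure.inner_map_self (hJ : IsCompatibleComplexStructure J)
    (x : E) : ⟪J x, x⟫ = 0 := by
  rw [real_inner_comm, hJ.inner_self_map]

theorem IsCompatibleComplexStructure.norm_map (hJ : IsCompatibleComplexStructure J) (x : E) :
    ‖J x‖ = ‖x‖ := by
  rw [norm_eq_sqrt_real_inner, hJ.inner_map_map, ← norm_eq_sqrt_real_inner]

theorem IsCurvatureTensor.swap_pairs (hR : IsCurvatureTensor R) (x y z u : E) :
    R x y z u = R z u x y := by
  linarith [hR.bianchi z x y u, hR.bianchi x y u z, hR.bianchi y u z x, hR.bianchi u z x y,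
    hR.antisymm_right x y z u, hR.antisymm_right y u x z, hR.antisymm_left u z y x,
    hR.antisymm_right z u x y, hR.antisymm_left z y u x, hR.antisymm_right y z x u,
    hR.antisymm_left u z x y, hR.antisymm_right z x y u, hR.antisymm_left x u z y,
    hR.antisymm_right u x y z]

theorem IsCurvatureTensor.apply_rev (hR : IsCurvatureTensor R) (x y z u : E) :
    R x y z u = R u z y x := by
  rw [hR.swap_pairs, hR.antisymm_left, hR.antisymm_right, neg_neg]

theorem HasConstAntiholomorphicCurvature.apply_eq (hν : HasConstAntiholomorphicCurvature J R ν)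
    (hJ : IsCompatibleComplexStructure J) {x y : E} (hxy : ⟪x, y⟫ = 0) (hJxy : ⟪J x, y⟫ = 0) :
    R x y y x = ν * (⟪x, x⟫ * ⟪y, y⟫) := by
  have unit_left : ∀ x : E, ‖x‖ = 1 → ∀ y, ⟪x, y⟫ = 0 → ⟪J x, y⟫ = 0 →
      R x y y x = ν * ⟪y, y⟫ := fun x hx _ hxy hJxy =>
    LinearMap.BilinForm.apply_self_eq_mul_inner_self (B := (R x).compr₂ (LinearMap.applyₗ x))
      (hν x · hx) hxy hJxy
  have unit_right : ∀ z, ‖z‖ = 1 → ⟪y, z⟫ = 0 → ⟪J y, z⟫ = 0 → R z y y z = ν * ⟪y, y⟫ :=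
    fun z hz hyz hJyz => unit_left z hz y (by rwa [real_inner_comm])
      (by rw [hJ.inner_map_left, real_inner_comm, hJyz, neg_zero])
  rw [mul_comm ⟪x, x⟫, ← mul_assoc]
  exact LinearMap.BilinForm.apply_self_eq_mul_inner_self (B := (R.flip y).flip y) unit_right
    (by rwa [real_inner_comm]) (by rw [real_inner_comm, ← neg_eq_zero, ← hJ.inner_map_left, hJxy])

theorem HasConstAntiholomorphicCurvature.apply_J_add_eq
    (hν : HasConstAntiholomorphicCurvature J R ν) (hJ : IsCompatibleComplexStructure J)
    (hR : IsCurvatureTensor R) (hRK : IsRKTensor J R)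
    {x y : E} (hx : ‖x‖ = 1) (hy : ‖y‖ = 1) (hxy : ⟪x, y⟫ = 0) (hJxy : ⟪J x, y⟫ = 0) :
    2 * (R x y (J x) (J y) + R x (J x) y (J y))
      = 2 * ν - R x (J x) (J x) x - R y (J y) (J y) y := by
  have hx1 : ⟪x, x⟫ = 1 := inner_self_eq_one_of_norm_eq_one hx
  have hy1 : ⟪y, y⟫ = 1 := inner_self_eq_one_of_norm_eq_one hy
  have hyx : ⟪y, x⟫ = 0 := by rwa [real_inner_comm]
  have hyJx : ⟪y, J x⟫ = 0 := by rwa [real_inner_comm]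
  have hxJy : ⟪x, J y⟫ = 0 := by rw [← neg_eq_zero, ← hJ.inner_map_left, hJxy]
  have hJyx : ⟪J y, x⟫ = 0 := by rwa [real_inner_comm]
  have expand := hν.apply_eq hJ (x := x + J y) (y := y + J x)
    (by simp only [inner_add_left, inner_add_right, hJ.inner_map_map, hJ.inner_self_map,
          hJ.inner_map_self, hxy, hyx]; ring)
    (by simp only [map_add, hJ.apply_apply, inner_add_left, inner_add_right, inner_neg_left,
          hJ.inner_map_map, hJxy, hyJx, hx1, hy1]; ring)
  simp only [inner_add_left, inner_add_right, hJ.inner_map_map, hyJx, hxJy, hJyx, hJxy, hx1,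
    hy1, map_add, LinearMap.add_apply] at expand
  have hxy' : R x y y x = ν := hν x y hx hy hxy hJxy
  have hJyJx : R (J y) (J x) (J x) (J y) = ν := hν (J y) (J x) (by rwa [hJ.norm_map])
    (by rwa [hJ.norm_map]) (by rw [hJ.inner_map_map, hyx])
    (by rw [hJ.apply_apply, inner_neg_left, hyJx, neg_zero])
  have c₁ : R x y y (J y) = -R (J y) y (J x) (J y) := by
    rw [hRK x y y (J y)]
    simp only [hJ.apply_apply, map_neg]
    rw [hR.swap_pairs]
  have c₂ : R x y (J x) x = -R x (J x) (J x) (J y) := by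
    rw [hRK x y (J x) x]
    simp only [hJ.apply_apply, map_neg, LinearMap.neg_apply]
    rw [hR.swap_pairs]
  have c₃ : R x (J x) y x = -R (J y) (J x) (J x) x := by
    rw [hRK x (J x) y x]
    simp only [hJ.apply_apply, map_neg, LinearMap.neg_apply]
    rw [hR.swap_pairs]
  have c₄ : R (J y) y y x = -R (J y) (J x) y (J y) := by
    rw [hR.swap_pairs, hRK y x (J y) y]
    simp only [hJ.apply_apply, map_neg, LinearMap.neg_apply]
  linarith [hR.swap_pairs (J y) y y (J y), hR.apply_rev (J y) y (J x) x,
    hR.apply_rev (J y) (J x) y x]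

theorem HasConstAntiholomorphicCurvature.apply_J_sub_eq
    (hν : HasConstAntiholomorphicCurvature J R ν) (hJ : IsCompatibleComplexStructure J)
    (hR : IsCurvatureTensor R) (hRK : IsRKTensor J R)
    {x y : E} (hx : ‖x‖ = 1) (hy : ‖y‖ = 1) (hxy : ⟪x, y⟫ = 0) (hJxy : ⟪J x, y⟫ = 0) :
    2 * (R x (J x) y (J y) - R x (J y) (J x) y)
      = 2 * ν - R x (J x) (J x) x - R y (J y) (J y) y := by
  have hx1 : ⟪x, x⟫ = 1 := inner_self_eq_one_of_norm_eq_one hx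
  have hy1 : ⟪y, y⟫ = 1 := inner_self_eq_one_of_norm_eq_one hy
  have hyx : ⟪y, x⟫ = 0 := by rwa [real_inner_comm]
  have hyJx : ⟪y, J x⟫ = 0 := by rwa [real_inner_comm]
  have hxJy : ⟪x, J y⟫ = 0 := by rw [← neg_eq_zero, ← hJ.inner_map_left, hJxy]
  have expand := hν.apply_eq hJ (x := x + y) (y := J x - J y)
    (by simp only [inner_add_left, inner_sub_right, hJ.inner_self_map, hxJy, hyJx]; ring)
    (by simp only [map_add, inner_add_left, inner_sub_right, hJ.inner_map_map, hx1, hy1, hxy,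
          hyx]; ring)
  simp only [inner_add_left, inner_add_right, inner_sub_left, inner_sub_right,
    hJ.inner_map_map, hxy, hyx, hx1, hy1, map_add, map_sub, LinearMap.add_apply,
    LinearMap.sub_apply] at expand
  have hxJy' : R x (J y) (J y) x = ν := hν x (J y) hx (by rwa [hJ.norm_map]) hxJy
    (by rw [hJ.inner_map_map, hxy])
  have hyJx' : R y (J x) (J x) y = ν := hν y (J x) hy (by rwa [hJ.norm_map]) hyJx
    (by rw [hJ.inner_map_map, hyx])
  have d₁ : R x (J x) (J y) x = R y (J x) (J x) x := by
    rw [hRK x (J x) (J y) x]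
    simp only [hJ.apply_apply, map_neg, LinearMap.neg_apply, neg_neg]
    rw [hR.swap_pairs]
  have d₂ : R x (J x) (J x) y = R x (J y) (J x) x := by
    rw [hRK x (J x) (J x) y]
    simp only [hJ.apply_apply, map_neg, LinearMap.neg_apply, neg_neg]
    rw [hR.swap_pairs]
  have d₃ : R x (J y) (J y) y = R y (J y) (J x) y := by
    rw [hRK x (J y) (J y) y]
    simp only [hJ.apply_apply, map_neg, LinearMap.neg_apply, neg_neg]
    rw [hR.swap_pairs]
  have d₄ : R y (J y) (J y) x = R y (J x) (J y) y := by
    rw [hRK y (J y) (J y) x]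
    simp only [hJ.apply_apply, map_neg, LinearMap.neg_apply, neg_neg]
    rw [hR.swap_pairs]
  linarith [hR.swap_pairs y (J y) (J x) x, hR.antisymm_left (J x) x y (J y),
    hR.apply_rev y (J x) (J y) x, hR.antisymm_right x (J x) y (J y)]

theorem HasConstAntiholomorphicCurvature.six_mul_apply_J_eq
    (hν : HasConstAntiholomorphicCurvature J R ν) (hJ : IsCompatibleComplexStructure J)
    (hR : IsCurvatureTensor R) (hRK : IsRKTensor J R)
    {x y : E} (hx : ‖x‖ = 1) (hy : ‖y‖ = 1) (hxy : ⟪x, y⟫ = 0) (hJxy : ⟪J x, y⟫ = 0) :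
    6 * R x y (J x) (J y) = 2 * ν - R x (J x) (J x) x - R y (J y) (J y) y := by
  linarith [hν.apply_J_add_eq hJ hR hRK hx hy hxy hJxy,
    hν.apply_J_sub_eq hJ hR hRK hx hy hxy hJxy,
    hR.bianchi x y (J x) (J y), hR.swap_pairs y (J x) x (J y),
    hR.antisymm_right x (J y) y (J x), hR.antisymm_left (J x) x y (J y)]

end Curvature

section Ricci
variable {ι E : Type*} [Fintype ι] [NormedAddCommGroup E] [InnerProductSpace ℝ E]
variable {J : E →ₗ[ℝ] E} {R : E →ₗ[ℝ] E →ₗ[ℝ] E →ₗ[ℝ] E →ₗ[ℝ] ℝ} {ν : ℝ}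

noncomputable def ricci (b : OrthonormalBasis ι ℝ E) (R : E →ₗ[ℝ] E →ₗ[ℝ] E →ₗ[ℝ] E →ₗ[ℝ] ℝ) :
    LinearMap.BilinForm ℝ E :=
  ∑ i, (R (b i)).compr₂ (LinearMap.applyₗ (b i))

theorem ricci_apply (b : OrthonormalBasis ι ℝ E) (x y : E) :
    ricci b R x y = ∑ i, R (b i) x y (b i) := by
  simp [ricci]

theorem HasConstAntiholomorphicCurvature.ricci_apply_self
    (hν : HasConstAntiholomorphicCurvature J R ν) (hJ : IsCompatibleComplexStructure J)
    (hR : IsCurvatureTensor R) (b : OrthonormalBasis ι ℝ E) {x : E} (hx : ‖x‖ = 1) :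
    ricci b R x x = R x (J x) (J x) x + (Fintype.card ι - 2) * ν := by
  have trace := b.sum_apply_self_eq_of_orthogonal ((R.flip x).flip x) hx
    (by rwa [hJ.norm_map]) (hJ.inner_self_map x) (c := ν) fun y hy hxy hJxy => by
      simp only [LinearMap.flip_apply]
      rw [hR.swap_pairs]
      exact hν x y hx hy hxy hJxy
  simp only [LinearMap.flip_apply] at trace
  rw [ricci_apply, trace, hR.swap_pairs (J x)]
  linarith [hR.antisymm_left x x x x]

theorem HasConstAntiholomorphicCurvature.six_mul_sum_add_sum_ricci
    (hν : HasConstAntiholomorphicCurvature J R ν) (hJ : IsCompatibleComplexStructure J)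
    (hR : IsCurvatureTensor R) (hRK : IsRKTensor J R)
    (b : OrthonormalBasis ι ℝ E) {x : E} (hx : ‖x‖ = 1) :
    6 * ∑ i, R x (b i) (J x) (J (b i)) + ∑ i, ricci b R (b i) (b i)
      = (Fintype.card ι + 2) * (2 * (Fintype.card ι - 2) * ν - ricci b R x x) := by
  have hJx : ‖J x‖ = 1 := by rwa [hJ.norm_map]
  have trace := b.sum_apply_self_eq_of_orthogonal
    ((6 : ℝ) • ((R x).flip (J x)).compl₂ J + ricci b R) hx hJx (hJ.inner_self_map x)
    (c := Fintype.card ι * ν - R x (J x) (J x) x)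
    fun y hy hxy hJxy => by
      simp only [LinearMap.add_apply, LinearMap.smul_apply, LinearMap.compl₂_apply,
        LinearMap.flip_apply, smul_eq_mul, hν.ricci_apply_self hJ hR b hy]
      linarith [hν.six_mul_apply_J_eq hJ hR hRK hx hy hxy hJxy]
  have hHJ : R (J x) (J (J x)) (J (J x)) (J x) = R x (J x) (J x) x := by
    simp only [hJ.apply_apply, map_neg, LinearMap.neg_apply, neg_neg]
    exact hR.swap_pairs _ _ _ _
  simp only [LinearMap.add_apply, LinearMap.smul_apply, LinearMap.compl₂_apply,
    LinearMap.flip_apply, smul_eq_mul, Finset.sum_add_distrib, ← Finset.mul_sum,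
    hν.ricci_apply_self hJ hR b hx, hν.ricci_apply_self hJ hR b hJx, hHJ] at trace ⊢
  rw [hJ.apply_apply, map_neg] at trace
  linarith [hR.antisymm_left x x (J x) (J x)]

theorem HasConstAntiholomorphicCurvature.scalar_curvature_relation
    (hν : HasConstAntiholomorphicCurvature J R ν) (hJ : IsCompatibleComplexStructure J)
    (hR : IsCurvatureTensor R) (hRK : IsRKTensor J R)
    (b : OrthonormalBasis ι ℝ E) :
    (Fintype.card ι + 1) * ∑ i, ricci b R (b i) (b i)
        + 3 * ∑ i, ∑ j, R (b i) (b j) (J (b i)) (J (b j))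
      = Fintype.card ι * (Fintype.card ι + 2) * (Fintype.card ι - 2) * ν := by
  have summed := Finset.sum_congr rfl fun i (_ : i ∈ Finset.univ) =>
    hν.six_mul_sum_add_sum_ricci hJ hR hRK b (b.norm_eq_one i)
  simp only [Finset.sum_add_distrib, ← Finset.mul_sum, Finset.sum_sub_distrib, Finset.sum_const,
    Finset.card_univ, nsmul_eq_mul] at summed
  linear_combination summed / 2

end Ricci

/-- Proposition 1, equation (8): ν = ((2n+1)τ - 3τ′) / (8n(n²-1)). -/
theorem stmt_4 {E : Type*} [NormedAddCommGroup E] [InnerProductSpace ℝ E]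
    {n : ℕ} (hn : 4 ≤ 2 * n)
    (b : OrthonormalBasis (Fin (2 * n)) ℝ E)
    (J : E →ₗ[ℝ] E)
    (hJ2 : ∀ x : E, J (J x) = -x)
    (hJg : ∀ x y : E, ⟪J x, J y⟫ = ⟪x, y⟫)
    (R : E →ₗ[ℝ] E →ₗ[ℝ] E →ₗ[ℝ] E →ₗ[ℝ] ℝ)
    (hR1 : ∀ x y z u : E, R x y z u = - R y x z u)
    (hR2 : ∀ x y z u : E, R x y z u = - R x y u z)
    (hRb : ∀ x y z u : E, R x y z u + R y z x u + R z x y u = 0)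
    (hRK : ∀ x y z u : E, R x y z u = R (J x) (J y) (J z) (J u))
    (ν : ℝ)
    (hν : ∀ x y : E, ‖x‖ = 1 → ‖y‖ = 1 → ⟪x, y⟫ = 0 → ⟪J x, y⟫ = 0 →
      R x y y x = ν)
    (S : E → E → ℝ)
    (hS : ∀ x y : E, S x y = ∑ i, R (b i) x y (b i))
    (S' : E → E → ℝ)
    (hS' : ∀ x y : E, S' x y = ∑ i, R (b i) x (J y) (J (b i)))
    (τ τ' : ℝ)
    (hτ : τ = ∑ i, S (b i) (b i))
    (hτ' : τ' = ∑ i, S' (b i) (b i)) :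
    ν = ((2 * (n : ℝ) + 1) * τ - 3 * τ') / (8 * (n : ℝ) * ((n : ℝ) ^ 2 - 1)) := by
  have relation := HasConstAntiholomorphicCurvature.scalar_curvature_relation (ν := ν) hν
    ⟨hJ2, hJg⟩ ⟨hR1, hR2, hRb⟩ hRK b
  have hτ_ricci : τ = ∑ i, ricci b R (b i) (b i) := by simp only [hτ, hS, ricci_apply]
  have hτ'_sum : τ' = -∑ i, ∑ j, R (b i) (b j) (J (b i)) (J (b j)) := by
    simp only [hτ', hS']
    rw [Finset.sum_comm, ← Finset.sum_neg_distrib]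
    refine Finset.sum_congr rfl fun i _ => ?_
    rw [← Finset.sum_neg_distrib]
    exact Finset.sum_congr rfl fun j _ => hR2 _ _ _ _
  have hn2 : (2 : ℝ) ≤ n := by exact_mod_cast (by omega : 2 ≤ n)
  rw [eq_div_iff (by nlinarith), hτ_ricci, hτ'_sum]
  simp only [Fintype.card_fin, Nat.cast_mul, Nat.cast_ofNat] at relation
  linear_combination (-1 : ℝ) * relation
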